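/- arXiv:1804.00369 — 4 statements merged into one kernel-verified Lean document; each statement's English description precedes it below -/
import Mathlib

section
/- With M and \widehat{M}(n) as above and μ ≤ −1 a real number: if \widehat{M}(n) has a principal submatrix of order at most m with smallest eigenvalue less than μ, then M also has a principal submatrix of order at most m with smallest eigenvalue less than μ. -/
open Matrix

/-- The block matrix `M̂(n)` of the paper: block rows `(M¹¹, M¹², O)`, `(M²¹, M²²+J, J)`,
`(O, J, J-I)`, here built from `M` indexed by `I1 ⊕ I2` by adding `J` on the `I2 × I2` block. -/
noncomputable def Mhat {I1 I2 : Type*} [Fintype I1] [Fintype I2]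
    [DecidableEq I1] [DecidableEq I2]
    (M : Matrix (I1 ⊕ I2) (I1 ⊕ I2) ℝ) (n : ℕ) :
    Matrix ((I1 ⊕ I2) ⊕ Fin n) ((I1 ⊕ I2) ⊕ Fin n) ℝ :=
  Matrix.fromBlocks
    (M + Matrix.fromBlocks 0 0 0 (Matrix.of fun _ _ => (1 : ℝ)))
    (Matrix.of fun a _ => Sum.elim (fun _ => (0 : ℝ)) (fun _ => 1) a)
    (Matrix.of fun _ a => Sum.elim (fun _ => (0 : ℝ)) (fun _ => 1) a)
    (Matrix.of (fun _ _ => (1 : ℝ)) - 1)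

/-!
A principal submatrix of order at most `m` with smallest eigenvalue below `μ` exists exactly when
some vector `x` with at most `m` nonzero entries has Rayleigh quotient below `μ`. Splitting `x`
into its parts `y` on `I₁ ∪ I₂` and `z` on `I₃`, and writing `c` for the indicator of `I₂ ∪ I₃`,
`xᵀ M̂(n) x = yᵀ M y + (c ⬝ x)² - |z|²` while `|x|² = |y|² + |z|²`. So if `xᵀ M̂(n) x < μ |x|²`
then `yᵀ M y < μ |y|² + (μ + 1) |z|² ≤ μ |y|²` because `μ ≤ -1`, and `y` has no more nonzero
entries than `x`.
-/

open Finset Function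
open scoped MatrixOrder

namespace Matrix

section Extend

variable {ι κ R : Type*} [Fintype ι] [Fintype κ] [CommSemiring R] {g : κ → ι}

theorem extend_dotProduct (hg : Injective g) (x : κ → R) (v : ι → R) :
    extend g x 0 ⬝ᵥ v = x ⬝ᵥ (v ∘ g) :=
  (Fintype.sum_of_injective g hg _ _
    (fun a ha => by rw [extend_apply' _ _ _ (by simpa using ha), Pi.zero_apply, zero_mul])
    (fun i => by rw [hg.extend_apply, Function.comp_apply])).symm

theorem extend_dotProduct_mulVec_extend (hg : Injective g) (B : Matrix ι ι R) (x : κ → R) :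
    extend g x 0 ⬝ᵥ B *ᵥ extend g x 0 = x ⬝ᵥ B.submatrix g g *ᵥ x := by
  rw [extend_dotProduct hg]
  congr 1
  ext i
  change B (g i) ⬝ᵥ extend g x 0 = (B (g i) ∘ g) ⬝ᵥ x
  rw [dotProduct_comm, extend_dotProduct hg, dotProduct_comm]

end Extend

namespace IsHermitian

variable {ι : Type*} [Fintype ι] [DecidableEq ι] {B : Matrix ι ι ℝ}

theorem exists_eigenvalues_lt_iff (hB : B.IsHermitian) (μ : ℝ) :
    (∃ i, hB.eigenvalues i < μ) ↔ ∃ x : ι → ℝ, x ⬝ᵥ B *ᵥ x < μ * (x ⬝ᵥ x) := by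
  constructor
  · rintro ⟨i, hi⟩
    set v : ι → ℝ := ⇑(hB.eigenvectorBasis i)
    have hv : 0 < v ⬝ᵥ v := by
      have hv0 : v ≠ 0 := mt (WithLp.ofLp_eq_zero 2).1 (hB.eigenvectorBasis.orthonormal.ne_zero i)
      simpa only [star_trivial] using dotProduct_star_self_pos_iff.2 hv0
    refine ⟨v, ?_⟩
    rw [hB.mulVec_eigenvectorBasis i, dotProduct_smul, smul_eq_mul]
    exact mul_lt_mul_of_pos_right hi hv
  · rintro ⟨x, hx⟩
    by_contra! h
    have hpsd : (B - μ • 1).PosSemidef := by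
      rw [← le_iff, ← Algebra.algebraMap_eq_smul_one,
        algebraMap_le_iff_le_spectrum hB.isSelfAdjoint, hB.spectrum_real_eq_range_eigenvalues]
      rintro _ ⟨i, rfl⟩
      exact h i
    have := hpsd.dotProduct_mulVec_nonneg x
    simp only [sub_mulVec, smul_mulVec, one_mulVec, dotProduct_sub, dotProduct_smul,
      star_trivial, smul_eq_mul] at this
    linarith

-- `μ ≤ 0` only excludes the empty matrix, whose `⨅` takes the junk value `0`.
theorem iInf_eigenvalues_lt_iff (hB : B.IsHermitian) {μ : ℝ} (hμ : μ ≤ 0) :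
    (⨅ i, hB.eigenvalues i) < μ ↔ ∃ x : ι → ℝ, x ⬝ᵥ B *ᵥ x < μ * (x ⬝ᵥ x) := by
  rcases isEmpty_or_nonempty ι with hι | hι
  · simp [Real.iInf_of_isEmpty, dotProduct, hμ]
  · rw [← hB.exists_eigenvalues_lt_iff, ciInf_lt_iff (Set.finite_range _).bddBelow]

theorem exists_submatrix_iInf_eigenvalues_lt_iff (hB : B.IsHermitian) {μ : ℝ} (hμ : μ ≤ 0)
    (m : ℕ) :
    (∃ (k : ℕ) (_ : k ≤ m) (g : Fin k ↪ ι), (⨅ i, (hB.submatrix g).eigenvalues i) < μ) ↔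
      ∃ x : ι → ℝ, #{i | x i ≠ 0} ≤ m ∧ x ⬝ᵥ B *ᵥ x < μ * (x ⬝ᵥ x) := by
  constructor
  · rintro ⟨k, hkm, g, hg⟩
    obtain ⟨x, hx⟩ := ((hB.submatrix g).iInf_eigenvalues_lt_iff hμ).1 hg
    refine ⟨extend g x 0, ?_, ?_⟩
    · have hsupp : ({i | extend g x 0 i ≠ 0} : Finset ι) ⊆ univ.map g := fun i hi => by
        by_contra hni
        exact (mem_filter.1 hi).2 (extend_apply' _ _ _ (by simpa using hni))
      exact (card_le_card hsupp).trans (by simpa using hkm)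
    · rwa [extend_dotProduct_mulVec_extend g.injective, extend_dotProduct g.injective,
        extend_comp g.injective]
  · rintro ⟨x, hxm, hx⟩
    set s : Finset ι := {i | x i ≠ 0}
    set g : Fin #s ↪ ι := s.equivFin.symm.toEmbedding.trans (.subtype (· ∈ s))
    have hx_extend : extend g (x ∘ g) 0 = x := by
      funext a
      by_cases ha : a ∈ s
      · obtain ⟨j, rfl⟩ : ∃ j, g j = a := ⟨s.equivFin ⟨a, ha⟩, by simp [g]⟩
        exact g.injective.extend_apply _ _ j
      · rw [extend_apply' _ _ _ fun ⟨j, hj⟩ => ha (hj ▸ (s.equivFin.symm j).2)]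
        simpa [s, eq_comm] using ha
    refine ⟨#s, hxm, g, ((hB.submatrix g).iInf_eigenvalues_lt_iff hμ).2 ⟨x ∘ g, ?_⟩⟩
    rwa [← extend_dotProduct_mulVec_extend g.injective, ← extend_dotProduct g.injective,
      hx_extend]

end IsHermitian
end Matrix

section Mhat

variable {I1 I2 : Type*} [Fintype I1] [Fintype I2] [DecidableEq I1] [DecidableEq I2]
  (M : Matrix (I1 ⊕ I2) (I1 ⊕ I2) ℝ) {n : ℕ}

theorem Mhat_eq :
    Mhat M n = fromBlocks M 0 0 0
      + vecMulVec (Sum.elim (Sum.elim 0 1) 1) (Sum.elim (Sum.elim 0 1) 1) - fromBlocks 0 0 0 1 := by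
  ext (a | a) (b | b)
  · rcases a with a | a <;> rcases b with b | b <;> simp [Mhat, vecMulVec]
  · rcases a with a | a <;> simp [Mhat, vecMulVec]
  · rcases b with b | b <;> simp [Mhat, vecMulVec]
  · simp [Mhat, vecMulVec]

theorem dotProduct_Mhat_mulVec (x : (I1 ⊕ I2) ⊕ Fin n → ℝ) :
    x ⬝ᵥ Mhat M n *ᵥ x = (x ∘ Sum.inl) ⬝ᵥ M *ᵥ (x ∘ Sum.inl)
      + (∑ i, x (.inl (.inr i)) + ∑ j, x (.inr j)) ^ 2 - (x ∘ Sum.inr) ⬝ᵥ (x ∘ Sum.inr) := by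
  rw [Mhat_eq, sub_mulVec, add_mulVec, vecMulVec_mulVec, dotProduct_sub, dotProduct_add]
  conv_lhs => rw [← Sum.elim_comp_inl_inr x]
  simp only [dotProduct, Sum.elim_comp_inl_inr, fromBlocks_mulVec, zero_mulVec, add_zero,
    Fintype.sum_sum_type, Sum.elim_inl, Sum.elim_inr, Pi.zero_apply, mul_zero, sum_const_zero,
    zero_mul, Pi.one_apply, one_mul, zero_add, MulOpposite.op_add, op_sum, Pi.smul_apply,
    MulOpposite.smul_eq_mul_unop, MulOpposite.unop_add, unop_sum, MulOpposite.unop_op, ← sum_mul,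
    one_mulVec, Function.comp_apply, sub_left_inj, add_right_inj]
  ring

theorem dotProduct_mulVec_inl_lt_of_Mhat {μ : ℝ} (hμ : μ ≤ -1) {x : (I1 ⊕ I2) ⊕ Fin n → ℝ}
    (hx : x ⬝ᵥ Mhat M n *ᵥ x < μ * (x ⬝ᵥ x)) :
    (x ∘ Sum.inl) ⬝ᵥ M *ᵥ (x ∘ Sum.inl) < μ * ((x ∘ Sum.inl) ⬝ᵥ (x ∘ Sum.inl)) := by
  have hnorm : x ⬝ᵥ x = (x ∘ Sum.inl) ⬝ᵥ (x ∘ Sum.inl) + (x ∘ Sum.inr) ⬝ᵥ (x ∘ Sum.inr) := by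
    rw [← sumElim_dotProduct_sumElim, Sum.elim_comp_inl_inr]
  have hz : 0 ≤ (x ∘ Sum.inr) ⬝ᵥ (x ∘ Sum.inr) := sum_nonneg fun j _ => mul_self_nonneg _
  rw [dotProduct_Mhat_mulVec, hnorm] at hx
  nlinarith [sq_nonneg (∑ i, x (.inl (.inr i)) + ∑ j, x (.inr j)),
    mul_le_mul_of_nonneg_right hμ hz]

end Mhat

theorem stmt_7_general {I1 I2 : Type*} [Fintype I1] [Fintype I2]
    [DecidableEq I1] [DecidableEq I2]
    (M : Matrix (I1 ⊕ I2) (I1 ⊕ I2) ℝ) (hM : M.IsHermitian)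
    {n : ℕ} (hMh : (Mhat M n).IsHermitian)
    (μ : ℝ) (hμ : μ ≤ -1) (m : ℕ)
    (h : ∃ (k : ℕ) (_ : k ≤ m) (f : Fin k ↪ ((I1 ⊕ I2) ⊕ Fin n)),
      (⨅ i, (hMh.submatrix (f : Fin k → ((I1 ⊕ I2) ⊕ Fin n))).eigenvalues i) < μ) :
    ∃ (k : ℕ) (_ : k ≤ m) (g : Fin k ↪ (I1 ⊕ I2)),
      (⨅ i, (hM.submatrix (g : Fin k → (I1 ⊕ I2))).eigenvalues i) < μ := by
  have hμ0 : μ ≤ 0 := by linarith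
  obtain ⟨x, hxm, hx⟩ := (hMh.exists_submatrix_iInf_eigenvalues_lt_iff hμ0 m).1 h
  have hsupp : #{i | (x ∘ Sum.inl) i ≠ 0} ≤ #{a | x a ≠ 0} :=
    card_le_card_of_injOn Sum.inl (fun i hi => by simpa using hi) Sum.inl_injective.injOn
  exact (hM.exists_submatrix_iInf_eigenvalues_lt_iff hμ0 m).2
    ⟨x ∘ Sum.inl, hsupp.trans hxm, dotProduct_mulVec_inl_lt_of_Mhat M hμ hx⟩

/-- If `M̂(n)` has a principal submatrix of order at most `m` with smallest eigenvalue less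
than `μ ≤ -1`, then `M` also has a principal submatrix of order at most `m` with smallest
eigenvalue less than `μ`. -/
theorem stmt_7 {I1 I2 : Type*} [Fintype I1] [Fintype I2]
    [DecidableEq I1] [DecidableEq I2]
    (M : Matrix (I1 ⊕ I2) (I1 ⊕ I2) ℝ) (hM : M.IsHermitian)
    {n : ℕ} (hn : 1 ≤ n) (hMh : (Mhat M n).IsHermitian)
    (μ : ℝ) (hμ : μ ≤ -1) (m : ℕ)
    (h : ∃ (k : ℕ) (_ : k ≤ m) (f : Fin k ↪ ((I1 ⊕ I2) ⊕ Fin n)),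
      (⨅ i, (hMh.submatrix (f : Fin k → ((I1 ⊕ I2) ⊕ Fin n))).eigenvalues i) < μ) :
    ∃ (k : ℕ) (_ : k ≤ m) (g : Fin k ↪ (I1 ⊕ I2)),
      (⨅ i, (hM.submatrix (g : Fin k → (I1 ⊕ I2))).eigenvalues i) < μ :=
  stmt_7_general M hM hMh μ hμ m h
end

section
/- Conversely, with the notation of the previous statement: if there is a matrix Ñ with A(H) + L(t) = ÑᵀÑ with all entries in (1/√s)ℤ, define for each slim vertex x the vector N_x = Ñ_x − Σ_{f∈V_f(𝔥), f∼x} Ñ_f. Then the matrix N with columns (N_x)_{x slim} satisfies NᵀN = Sp(𝔥) + tI and has all entries in (1/√s)ℤ. -/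
open Matrix

/-- Converse construction: if `Ñᵀ Ñ = A(H) + L(t) = [[As + tI, C],[Cᵀ, I]]` with all entries
of `√s · Ñ` integral, then the matrix `N` with columns
`N_x = Ñ_x - ∑_{f ∼ x} Ñ_f` satisfies `Nᵀ N = Sp(𝔥) + tI = As - C Cᵀ + tI` and all its
entries lie in `(1/√s)ℤ`. -/
theorem stmt_12 {S F : Type*} [Fintype S] [Fintype F]
    [DecidableEq S] [DecidableEq F] [Nonempty S]
    (As : Matrix S S ℝ) (hAs : As.IsSymm)
    (C : Matrix S F ℝ) (hC : ∀ x f, C x f = 0 ∨ C x f = 1)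
    (hSp : (As - C * Cᵀ).IsHermitian)
    (t : ℤ) (ht : -(⨅ i, hSp.eigenvalues i) ≤ (t : ℝ))
    (s : ℕ) (hs : 0 < s) {r : ℕ}
    (Nt : Matrix (Fin r) (S ⊕ F) ℝ)
    (hNt : Ntᵀ * Nt = Matrix.fromBlocks (As + (t : ℝ) • 1) C Cᵀ 1)
    (hNtint : ∀ i j, ∃ z : ℤ, Real.sqrt s * Nt i j = z) :
    (Matrix.of fun (i : Fin r) (x : S) =>
        Nt i (Sum.inl x) - ∑ f, C x f * Nt i (Sum.inr f))ᵀ *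
      (Matrix.of fun (i : Fin r) (x : S) =>
        Nt i (Sum.inl x) - ∑ f, C x f * Nt i (Sum.inr f)) =
      As - C * Cᵀ + (t : ℝ) • 1 ∧
    ∀ i x, ∃ z : ℤ,
      Real.sqrt s * (Nt i (Sum.inl x) - ∑ f, C x f * Nt i (Sum.inr f)) = z := by
  have key : ∀ a b, ∑ i, Nt i a * Nt i b =
      Matrix.fromBlocks (As + (t : ℝ) • 1) C Cᵀ 1 a b := by
    intro a b
    have := congrFun (congrFun hNt a) b
    simpa [Matrix.mul_apply, mul_comm] using this
  constructor
  · ext x y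
    simp only [Matrix.mul_apply, Matrix.transpose_apply, Matrix.of_apply]
    have expand : ∀ i : Fin r,
        (Nt i (Sum.inl x) - ∑ f, C x f * Nt i (Sum.inr f)) *
          (Nt i (Sum.inl y) - ∑ g, C y g * Nt i (Sum.inr g)) =
        Nt i (Sum.inl x) * Nt i (Sum.inl y)
          - (∑ g, C y g * (Nt i (Sum.inl x) * Nt i (Sum.inr g)))
          - (∑ f, C x f * (Nt i (Sum.inr f) * Nt i (Sum.inl y)))
          + ∑ f, ∑ g, C x f * C y g * (Nt i (Sum.inr f) * Nt i (Sum.inr g)) := by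
      intro i
      have e1 : Nt i (Sum.inl x) * ∑ g, C y g * Nt i (Sum.inr g)
          = ∑ g, C y g * (Nt i (Sum.inl x) * Nt i (Sum.inr g)) := by
        rw [Finset.mul_sum]; exact Finset.sum_congr rfl fun g _ => by ring
      have e2 : (∑ f, C x f * Nt i (Sum.inr f)) * Nt i (Sum.inl y)
          = ∑ f, C x f * (Nt i (Sum.inr f) * Nt i (Sum.inl y)) := by
        rw [Finset.sum_mul]; exact Finset.sum_congr rfl fun f _ => by ring
      have e3 : (∑ f, C x f * Nt i (Sum.inr f)) * ∑ g, C y g * Nt i (Sum.inr g)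
          = ∑ f, ∑ g, C x f * C y g * (Nt i (Sum.inr f) * Nt i (Sum.inr g)) := by
        rw [Finset.sum_mul]
        refine Finset.sum_congr rfl fun f _ => ?_
        rw [Finset.mul_sum]
        exact Finset.sum_congr rfl fun g _ => by ring
      rw [sub_mul, mul_sub, mul_sub, e1, e2, e3]
      ring
    rw [Finset.sum_congr rfl (fun i _ => expand i)]
    rw [Finset.sum_add_distrib, Finset.sum_sub_distrib, Finset.sum_sub_distrib]
    have T1 : ∑ i, Nt i (Sum.inl x) * Nt i (Sum.inl y) = (As + (t : ℝ) • 1) x y := key _ _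
    have T2 : (∑ i : Fin r, ∑ g, C y g * (Nt i (Sum.inl x) * Nt i (Sum.inr g)))
        = ∑ g, C y g * C x g := by
      rw [Finset.sum_comm]
      refine Finset.sum_congr rfl fun g _ => ?_
      rw [← Finset.mul_sum, key]
      rfl
    have T3 : (∑ i : Fin r, ∑ f, C x f * (Nt i (Sum.inr f) * Nt i (Sum.inl y)))
        = ∑ f, C x f * C y f := by
      rw [Finset.sum_comm]
      refine Finset.sum_congr rfl fun f _ => ?_
      rw [← Finset.mul_sum, key]
      rfl
    have T4 : (∑ i : Fin r, ∑ f, ∑ g, C x f * C y g * (Nt i (Sum.inr f) * Nt i (Sum.inr g)))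
        = ∑ f, C x f * C y f := by
      rw [Finset.sum_comm]
      refine Finset.sum_congr rfl fun f _ => ?_
      rw [Finset.sum_comm]
      have : ∀ g, (∑ i : Fin r, C x f * C y g * (Nt i (Sum.inr f) * Nt i (Sum.inr g)))
          = C x f * C y g * (1 : Matrix F F ℝ) f g := by
        intro g
        rw [← Finset.mul_sum, key]
        rfl
      rw [Finset.sum_congr rfl fun g _ => this g, Finset.sum_eq_single f]
      · simp
      · intro g _ hg; simp [Matrix.one_apply_ne (Ne.symm hg)]
      · simp
    rw [T1, T2, T3, T4]
    have h2 : (∑ g, C y g * C x g) = ∑ f, C x f * C y f := by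
      exact Finset.sum_congr rfl fun f _ => by ring
    rw [h2]
    simp only [Matrix.add_apply, Matrix.sub_apply, Matrix.mul_apply, Matrix.transpose_apply,
      Matrix.smul_apply, smul_eq_mul]
    ring
  · intro i x
    obtain ⟨zx, hzx⟩ := hNtint i (Sum.inl x)
    have hf : ∀ f, ∃ z : ℤ, Real.sqrt s * (C x f * Nt i (Sum.inr f)) = z := by
      intro f
      rcases hC x f with h | h
      · exact ⟨0, by simp [h]⟩
      · obtain ⟨z, hz⟩ := hNtint i (Sum.inr f)
        refine ⟨z, ?_⟩
        rw [h, one_mul, hz]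
    refine ⟨zx - ∑ f, (hf f).choose, ?_⟩
    rw [mul_sub, hzx, Finset.mul_sum]
    push_cast
    congr 1
    exact Finset.sum_congr rfl fun f _ => (hf f).choose_spec
end

section
/- The graph \widetilde{K}_{2m} — the graph on 2m+1 vertices consisting of a complete graph K_{2m} together with one extra vertex adjacent to exactly m vertices of the K_{2m} — has smallest eigenvalue less than −2 provided m is sufficiently large; in particular, \widetilde{K}_{24} (m = 12) has smallest eigenvalue less than −3. -/
/-!
A vector that is constant on each of the three blocks (the first `m` clique vertices, the other
`m` clique vertices, and `∞`) is mapped by the adjacency matrix to a block-constant vector, through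
the quotient matrix `!![m - 1, m, 1; m, m - 1, 0; m, 0, 0]`. Hence the Rayleigh quotient of such a
vector is an explicit rational function of `m`, and a Rayleigh quotient below `t` forces an
eigenvalue below `t`. The vector `(1, -1, -2)` has Rayleigh quotient `-6m / (2m + 4) < -2` for
`m ≥ 5`; for `m = 12`, `(20, -17, -78)`, close to the bottom eigenvector of the quotient matrix
(eigenvalue `≈ -3.1`), has Rayleigh quotient `-44412 / 14352 < -3`.
-/

open Matrix

/-- The adjacency matrix of `K̃_{2m}`: vertices `0, …, 2m-1` form a clique and the extra
vertex `2m` is adjacent to exactly the vertices `0, …, m-1`. -/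
def KtildeAdj (m : ℕ) : Matrix (Fin (2 * m + 1)) (Fin (2 * m + 1)) ℝ :=
  Matrix.of fun i j =>
    if i = j then 0
    else if i.val < 2 * m ∧ j.val < 2 * m then 1
    else if (i.val = 2 * m ∧ j.val < m) ∨ (j.val = 2 * m ∧ i.val < m) then 1
    else 0

open scoped ComplexOrder

namespace Matrix

variable {n 𝕜 : Type*} [Fintype n] [DecidableEq n] [RCLike 𝕜] {A : Matrix n n 𝕜}

lemma IsHermitian.posSemidef_sub_smul_one (hA : A.IsHermitian) {c : ℝ}
    (hc : ∀ i, c ≤ hA.eigenvalues i) : (A - (c : 𝕜) • 1).PosSemidef := by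
  have hdiag : diagonal (RCLike.ofReal ∘ hA.eigenvalues) - (c : 𝕜) • (1 : Matrix n n 𝕜) =
      diagonal (RCLike.ofReal ∘ (hA.eigenvalues - fun _ ↦ c)) := by
    rw [smul_one_eq_diagonal, diagonal_sub]
    simp [Function.comp_def]
  rw [hA.spectral_theorem, ← map_one (Unitary.conjStarAlgAut 𝕜 _ hA.eigenvectorUnitary),
    ← map_smul, ← map_sub, hdiag, Unitary.conjStarAlgAut_apply,
    Unitary.isUnit_coe.posSemidef_star_right_conjugate_iff]
  simpa [Pi.le_def] using hc

lemma IsHermitian.exists_eigenvalues_lt (hA : A.IsHermitian) {x : n → 𝕜} {c : ℝ}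
    (hx : RCLike.re (star x ⬝ᵥ A *ᵥ x) < c * RCLike.re (star x ⬝ᵥ x)) :
    ∃ i, hA.eigenvalues i < c := by
  by_contra! hc
  have := (hA.posSemidef_sub_smul_one hc).re_dotProduct_nonneg x
  simp only [sub_mulVec, smul_mulVec, one_mulVec, dotProduct_sub, dotProduct_smul, smul_eq_mul,
    map_sub, RCLike.re_ofReal_mul, sub_nonneg] at this
  linarith

lemma IsHermitian.iInf_eigenvalues_lt (hA : A.IsHermitian) {x : n → 𝕜} {c : ℝ}
    (hx : RCLike.re (star x ⬝ᵥ A *ᵥ x) < c * RCLike.re (star x ⬝ᵥ x)) :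
    ⨅ i, hA.eigenvalues i < c :=
  have ⟨i, hi⟩ := hA.exists_eigenvalues_lt hx
  (ciInf_le (Set.finite_range _).bddBelow i).trans_lt hi

end Matrix

def ktildeBlock (m : ℕ) (i : Fin (2 * m + 1)) : Fin 3 :=
  if i.val < m then 0 else if i.val < 2 * m then 1 else 2

lemma sum_comp_ktildeBlock (m : ℕ) (g : Fin 3 → ℝ) :
    ∑ i, g (ktildeBlock m i) = m * g 0 + m * g 1 + g 2 := by
  unfold ktildeBlock
  rw [Fin.sum_univ_eq_sum_range (fun k ↦ g (if k < m then 0 else if k < 2 * m then 1 else 2)),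
    show 2 * m + 1 = m + m + 1 by omega, Finset.sum_range_succ, Finset.sum_range_add]
  have low : ∀ k ∈ Finset.range m, g (if k < m then 0 else if k < 2 * m then 1 else 2) = g 0 :=
    fun k hk ↦ by rw [if_pos (Finset.mem_range.mp hk)]
  have high : ∀ k ∈ Finset.range m,
      g (if m + k < m then 0 else if m + k < 2 * m then 1 else 2) = g 1 :=
    fun k hk ↦ by rw [if_neg (by omega), if_pos (by have := Finset.mem_range.mp hk; omega)]
  rw [Finset.sum_congr rfl low, Finset.sum_congr rfl high, if_neg (by omega), if_neg (by omega)]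
  simp

lemma KtildeAdj_eq_submatrix_sub_one (m : ℕ) :
    KtildeAdj m = (!![1, 1, 1; 1, 1, 0; 1, 0, 1] : Matrix (Fin 3) (Fin 3) ℝ).submatrix
      (ktildeBlock m) (ktildeBlock m) - 1 := by
  ext i j
  have hi := i.isLt
  have hj := j.isLt
  simp only [KtildeAdj, of_apply, Matrix.sub_apply, submatrix_apply, one_apply, Fin.ext_iff]
  unfold ktildeBlock
  split_ifs <;> first | omega | simp

lemma dotProduct_comp_ktildeBlock (m : ℕ) (v w : Fin 3 → ℝ) :
    (v ∘ ktildeBlock m) ⬝ᵥ (w ∘ ktildeBlock m) = m * (v 0 * w 0) + m * (v 1 * w 1) + v 2 * w 2 :=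
  sum_comp_ktildeBlock m (v * w)

lemma KtildeAdj_mulVec_comp_ktildeBlock (m : ℕ) (v : Fin 3 → ℝ) :
    KtildeAdj m *ᵥ (v ∘ ktildeBlock m) =
      ((!![m - 1, m, 1; m, m - 1, 0; m, 0, 0] : Matrix (Fin 3) (Fin 3) ℝ) *ᵥ v) ∘ ktildeBlock m := by
  ext i
  rw [KtildeAdj_eq_submatrix_sub_one, sub_mulVec, one_mulVec]
  simp only [Pi.sub_apply, mulVec, dotProduct, submatrix_apply, Function.comp_apply]
  rw [sum_comp_ktildeBlock m fun l ↦ _ * v l]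
  generalize ktildeBlock m i = k
  fin_cases k <;> simp [Fin.sum_univ_three] <;> ring

lemma iInf_eigenvalues_KtildeAdj_lt {m : ℕ} (hA : (KtildeAdj m).IsHermitian) (a b c t : ℝ)
    (h : m * a * ((m - 1) * a + m * b + c) + m * b * (m * a + (m - 1) * b) + c * (m * a) <
      t * (m * a ^ 2 + m * b ^ 2 + c ^ 2)) :
    ⨅ i, hA.eigenvalues i < t := by
  refine hA.iInf_eigenvalues_lt (x := ![a, b, c] ∘ ktildeBlock m) ?_
  rw [star_trivial, RCLike.re_to_real, RCLike.re_to_real, KtildeAdj_mulVec_comp_ktildeBlock,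
    dotProduct_comp_ktildeBlock, dotProduct_comp_ktildeBlock]
  simpa [mulVec, dotProduct, Fin.sum_univ_three, sq, mul_assoc] using h

/-- `K̃_{2m}` has smallest eigenvalue less than `-2` for all sufficiently large `m`; in
particular `K̃_{24}` (the case `m = 12`) has smallest eigenvalue less than `-3`. -/
theorem stmt_14 (hH : ∀ m, (KtildeAdj m).IsHermitian) :
    (∃ M : ℕ, ∀ m, M ≤ m → (⨅ i, (hH m).eigenvalues i) < -2) ∧
    (⨅ i, (hH 12).eigenvalues i) < -3 := by
  refine ⟨⟨5, fun m hm ↦ iInf_eigenvalues_KtildeAdj_lt (hH m) 1 (-1) (-2) (-2) ?_⟩,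
    iInf_eigenvalues_KtildeAdj_lt (hH 12) 20 (-17) (-78) (-3) (by norm_num)⟩
  have : (5 : ℝ) ≤ m := mod_cast hm
  linarith
end

section
/- Let M = [[−2, b₁],[b₁, b₂]] be a 2×2 real symmetric matrix with integer entries satisfying b₁ ≤ 1, b₂ ≤ 0, b₁ ≥ max{−2, b₂} − 1 and b₂ ≥ −2, such that M has smallest eigenvalue less than −2 but every proper principal submatrix of M has smallest eigenvalue at least −2. Then b₁ ∈ {1, −1, −2, −3} and −2 ≤ b₂ ≤ min{0, b₁ + 1}. -/
/-! Everything but `b₁ ≠ 0` is integer arithmetic on the hypotheses. If `b₁ = 0`, then `M` is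
diagonal with entries `-2` and `b₂ ≥ -2`, so its eigenvalues, which are its diagonal entries,
are all at least `-2`. -/

open Matrix

lemma Matrix.IsHermitian.le_eigenvalues_of_eq_diagonal {n : Type*} [Fintype n] [DecidableEq n]
    {A : Matrix n n ℝ} (hA : A.IsHermitian) {d : n → ℝ} (hd : A = diagonal d) {c : ℝ}
    (hc : ∀ j, c ≤ d j) (i : n) : c ≤ hA.eigenvalues i := by
  have hmem : hA.eigenvalues i ∈ Set.range d := by
    simpa [hd] using hA.eigenvalues_mem_spectrum_real i
  obtain ⟨j, hj⟩ := hmem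
  exact hj ▸ hc j

/-- For `M = [[-2, b₁],[b₁, b₂]]` with integer entries, `b₁ ≤ 1`, `b₂ ≤ 0`,
`b₁ ≥ max(-2, b₂) - 1`, `b₂ ≥ -2` (so every proper principal submatrix has smallest
eigenvalue at least `-2`) and smallest eigenvalue of `M` less than `-2`, one has
`b₁ ∈ {1, -1, -2, -3}` and `-2 ≤ b₂ ≤ min(0, b₁ + 1)`. -/
theorem stmt_16 (b1 b2 : ℤ)
    (M : Matrix (Fin 2) (Fin 2) ℝ)
    (hMdef : M = !![(-2 : ℝ), (b1 : ℝ); (b1 : ℝ), (b2 : ℝ)])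
    (hM : M.IsHermitian)
    (h1 : b1 ≤ 1) (h2 : b2 ≤ 0) (h3 : max (-2) b2 - 1 ≤ b1) (h4 : -2 ≤ b2)
    (hmin : (⨅ i, hM.eigenvalues i) < -2) :
    (b1 = 1 ∨ b1 = -1 ∨ b1 = -2 ∨ b1 = -3) ∧ -2 ≤ b2 ∧ b2 ≤ min 0 (b1 + 1) := by
  have hb1 : b1 ≠ 0 := by
    rintro rfl
    have hdiag : M = diagonal ![-2, (b2 : ℝ)] := by
      rw [hMdef]; ext i j; fin_cases i <;> fin_cases j <;> simp
    have hb2 : (-2 : ℝ) ≤ b2 := by exact_mod_cast h4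
    have hge : (-2 : ℝ) ≤ ⨅ i, hM.eigenvalues i :=
      le_ciInf <| hM.le_eigenvalues_of_eq_diagonal hdiag fun j => by fin_cases j <;> simp [hb2]
    linarith
  exact ⟨by omega, h4, by omega⟩
end
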